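/- Composition (Cut for programs): if P₁ is a strong solution to W, Γ₁, !Δ₁ ⊢ U and P₂ is a strong solution to U, Γ₂, !Δ₂ ⊢ Z, then the program P' obtained by gluing a copy of P₂ to each output vertex of P₁ is a strong solution to W, Γ₁, Γ₂, !Δ₁, !Δ₂ ⊢ Z. -/

import Mathlib

/-- Simple products of positive literals over `α`, represented as multisets of literals. -/
abbrev SP (α : Type) := Multiset α

/-- Horn implications `X ⊸ Y` and ⊕-Horn implications `X ⊸ (Y₁ ⊕ Y₂)`
over simple products. -/
inductive HF (α : Type) : Type
  | horn : SP α → SP α → HF α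
  | ohorn : SP α → SP α → SP α → HF α

instance {α : Type} [DecidableEq α] : DecidableEq (HF α)
  | HF.horn a b, HF.horn c d =>
      decidable_of_iff (a = c ∧ b = d) (by simp [HF.horn.injEq])
  | HF.horn _ _, HF.ohorn _ _ _ => isFalse (by simp)
  | HF.ohorn _ _ _, HF.horn _ _ => isFalse (by simp)
  | HF.ohorn a b c, HF.ohorn d e f =>
      decidable_of_iff (a = d ∧ b = e ∧ c = f) (by simp [HF.ohorn.injEq])

/-- Tree-like Horn programs: rooted binary trees whose edges are labelled by
Horn implications; a divergent vertex carries two Horn implications with a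
common antecedent `X` (coming from the ⊕-Horn implication `X ⊸ (Y₁ ⊕ Y₂)`). -/
inductive HT (α : Type) : Type
  | leaf : HT α
  | node1 : SP α → SP α → HT α → HT α
  | node2 : SP α → SP α → SP α → HT α → HT α → HT α

/-- `Sol P W Δ Γ Z`: the tree-like Horn program `P` is a strong solution to the
Horn sequent `W, Δ, !Γ ⊢ Z`: every strong-computation value is defined, every
leaf value equals `Z` (as a multiset), every formula used on an edge is drawn
from `Δ` or `Γ`, and on each root-to-leaf path each formula of the linear part
`Δ` is used exactly once (the formula used on the two edges of a divergent
vertex being the ⊕-Horn implication `X ⊸ (Y₁ ⊕ Y₂)`). -/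
def Sol {α : Type} [DecidableEq α] :
    HT α → SP α → Multiset (HF α) → Multiset (HF α) → SP α → Prop
  | HT.leaf, W, Δ, _, Z => W = Z ∧ Δ = 0
  | HT.node1 X Y t, W, Δ, Γ, Z =>
      X ≠ 0 ∧ Y ≠ 0 ∧ X ≤ W ∧
      ((HF.horn X Y ∈ Δ ∧ Sol t (W - X + Y) (Δ.erase (HF.horn X Y)) Γ Z) ∨
       (HF.horn X Y ∈ Γ ∧ Sol t (W - X + Y) Δ Γ Z))
  | HT.node2 X Y₁ Y₂ t₁ t₂, W, Δ, Γ, Z =>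
      X ≠ 0 ∧ Y₁ ≠ 0 ∧ Y₂ ≠ 0 ∧ X ≤ W ∧
      ((HF.ohorn X Y₁ Y₂ ∈ Δ ∧
          Sol t₁ (W - X + Y₁) (Δ.erase (HF.ohorn X Y₁ Y₂)) Γ Z ∧
          Sol t₂ (W - X + Y₂) (Δ.erase (HF.ohorn X Y₁ Y₂)) Γ Z) ∨
       (HF.ohorn X Y₁ Y₂ ∈ Γ ∧
          Sol t₁ (W - X + Y₁) Δ Γ Z ∧
          Sol t₂ (W - X + Y₂) Δ Γ Z))

/-- The strong-computation value `OUT(P, W, v)` at the vertex addressed by the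
path `p` (at a divergent vertex, `false` selects the first child and `true`
the second; a non-divergent vertex is descended by `false`).  `none` means
undefined. -/
def OUT {α : Type} [DecidableEq α] :
    HT α → SP α → List Bool → Option (SP α)
  | _, W, [] => some W
  | HT.leaf, _, _ :: _ => none
  | HT.node1 X Y t, W, false :: p =>
      if X ≤ W then OUT t (W - X + Y) p else none
  | HT.node1 _ _ _, _, true :: _ => none
  | HT.node2 X Y₁ _ t₁ _, W, false :: p =>
      if X ≤ W then OUT t₁ (W - X + Y₁) p else none
  | HT.node2 X _ Y₂ _ t₂, W, true :: p =>
      if X ≤ W then OUT t₂ (W - X + Y₂) p else none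

/-- Composition of tree-like Horn programs: glue a copy of `Q` to each
output (terminal) vertex of `P`. -/
def HT.graft {α : Type} : HT α → HT α → HT α
  | HT.leaf, Q => Q
  | HT.node1 X Y t, Q => HT.node1 X Y (t.graft Q)
  | HT.node2 X Y₁ Y₂ t₁ t₂, Q => HT.node2 X Y₁ Y₂ (t₁.graft Q) (t₂.graft Q)

theorem Sol_pers_mono {α : Type} [DecidableEq α]
    (P : HT α) : ∀ (W : SP α) (Δ Γ Γ' : Multiset (HF α)) (Z : SP α),
    Γ ≤ Γ' → Sol P W Δ Γ Z → Sol P W Δ Γ' Z := by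
  induction P with
  | leaf => intro W Δ Γ Γ' Z _ h; exact h
  | node1 X Y t ih =>
      intro W Δ Γ Γ' Z hle h
      obtain ⟨hX, hY, hXW, h⟩ := h
      refine ⟨hX, hY, hXW, ?_⟩
      rcases h with ⟨hm, hs⟩ | ⟨hm, hs⟩
      · exact Or.inl ⟨hm, ih _ _ _ _ _ hle hs⟩
      · exact Or.inr ⟨Multiset.subset_of_le hle hm, ih _ _ _ _ _ hle hs⟩
  | node2 X Y₁ Y₂ t₁ t₂ ih₁ ih₂ =>
      intro W Δ Γ Γ' Z hle h
      obtain ⟨hX, hY₁, hY₂, hXW, h⟩ := h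
      refine ⟨hX, hY₁, hY₂, hXW, ?_⟩
      rcases h with ⟨hm, hs₁, hs₂⟩ | ⟨hm, hs₁, hs₂⟩
      · exact Or.inl ⟨hm, ih₁ _ _ _ _ _ hle hs₁, ih₂ _ _ _ _ _ hle hs₂⟩
      · exact Or.inr ⟨Multiset.subset_of_le hle hm,
          ih₁ _ _ _ _ _ hle hs₁, ih₂ _ _ _ _ _ hle hs₂⟩

/-- Composition / Cut for programs: if `P₁` is a strong solution
to `W, Γ₁, !Δ₁ ⊢ U` and `P₂` is a strong solution to `U, Γ₂, !Δ₂ ⊢ Z`, then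
gluing a copy of `P₂` to each output vertex of `P₁` yields a strong solution
to `W, Γ₁, Γ₂, !Δ₁, !Δ₂ ⊢ Z`. -/
theorem composition_program {α : Type} [DecidableEq α]
    (P₁ P₂ : HT α) (W U Z : SP α) (Γ₁ Γ₂ Δ₁ Δ₂ : Multiset (HF α))
    (h₁ : Sol P₁ W Γ₁ Δ₁ U)
    (h₂ : Sol P₂ U Γ₂ Δ₂ Z) :
    Sol (P₁.graft P₂) W (Γ₁ + Γ₂) (Δ₁ + Δ₂) Z := by
  induction P₁ generalizing W Γ₁ with
  | leaf =>
      obtain ⟨rfl, rfl⟩ := h₁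
      simpa [HT.graft] using Sol_pers_mono P₂ _ _ _ _ _ (Multiset.le_add_left _ _) h₂
  | node1 X Y t ih =>
      obtain ⟨hX, hY, hXW, h⟩ := h₁
      refine ⟨hX, hY, hXW.trans ?_, ?_⟩
      · exact le_refl _
      rcases h with ⟨hm, hs⟩ | ⟨hm, hs⟩
      · refine Or.inl ⟨Multiset.mem_add.2 (Or.inl hm), ?_⟩
        rw [Multiset.erase_add_left_pos _ hm]
        exact ih _ _ hs
      · exact Or.inr ⟨Multiset.mem_add.2 (Or.inl hm), ih _ _ hs⟩
  | node2 X Y₁ Y₂ t₁ t₂ ih₁ ih₂ =>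
      obtain ⟨hX, hY₁, hY₂, hXW, h⟩ := h₁
      refine ⟨hX, hY₁, hY₂, hXW, ?_⟩
      rcases h with ⟨hm, hs₁, hs₂⟩ | ⟨hm, hs₁, hs₂⟩
      · refine Or.inl ⟨Multiset.mem_add.2 (Or.inl hm), ?_, ?_⟩ <;>
          rw [Multiset.erase_add_left_pos _ hm]
        · exact ih₁ _ _ hs₁
        · exact ih₂ _ _ hs₂
      · exact Or.inr ⟨Multiset.mem_add.2 (Or.inl hm), ih₁ _ _ hs₁, ih₂ _ _ hs₂⟩
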